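/- arXiv:1411.4159 — 2 statements merged into one kernel-verified Lean document; each statement's English description precedes it below -/
import Mathlib

section
/- Let R be a ring with identity. Then APOG(R) is connected if and only if A^l(IPO(R)) = A^r(IPO(R)). Moreover, if APOG(R) is connected, then every pair of distinct vertices of APOG(R) is joined by a directed path of length at most 3, i.e., diam(APOG(R)) ≤ 3. -/
open scoped Pointwise

/-- `I` is a left ideal of the ring `R`: an additive subgroup with `R·I ⊆ I`. -/
def IsLeftIdeal (R : Type*) [Ring R] (I : AddSubgroup R) : Prop :=
  ∀ r : R, ∀ x ∈ I, r * x ∈ I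

/-- `I` is a right ideal of the ring `R`: an additive subgroup with `I·R ⊆ I`. -/
def IsRightIdeal (R : Type*) [Ring R] (I : AddSubgroup R) : Prop :=
  ∀ r : R, ∀ x ∈ I, x * r ∈ I

/-- `I` is a one-sided (left or right) ideal of `R`. -/
def IsOneSidedIdeal (R : Type*) [Ring R] (I : AddSubgroup R) : Prop :=
  IsLeftIdeal R I ∨ IsRightIdeal R I

/-- `IPO(R)`: the set of all products `I*J` of two one-sided ideals of `R`.
Here `I * J` is the additive subgroup generated by `{a*b : a ∈ I, b ∈ J}`
(the pointwise product of additive subgroups). -/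
def IPO (R : Type*) [Ring R] : Set (AddSubgroup R) :=
  {A | ∃ I J : AddSubgroup R, IsOneSidedIdeal R I ∧ IsOneSidedIdeal R J ∧ A = I * J}

/-- `A` is a vertex of `APOG(R) = Γ(IPO(R))`: a nonzero element of `IPO(R)` that is a
one-sided zero-divisor of the semigroup `IPO(R)`. -/
def APOGVertex (R : Type*) [Ring R] (A : AddSubgroup R) : Prop :=
  A ∈ IPO R ∧ A ≠ ⊥ ∧ ∃ B ∈ IPO R, B ≠ ⊥ ∧ (A * B = ⊥ ∨ B * A = ⊥)

/-- The directed edge `A → B` of `APOG(R)`: both are vertices, `A ≠ B` and `A*B = 0`. -/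
def APOGEdge (R : Type*) [Ring R] (A B : AddSubgroup R) : Prop :=
  APOGVertex R A ∧ APOGVertex R B ∧ A ≠ B ∧ A * B = ⊥

/-- `APOG(R)` is connected: for any two distinct vertices there is a directed path from
the first to the second through vertices. -/
def APOGConnected (R : Type*) [Ring R] : Prop :=
  ∀ A B : AddSubgroup R, APOGVertex R A → APOGVertex R B → A ≠ B →
    Relation.TransGen (APOGEdge R) A B

/-- There is a directed path of length at most `3` from `A` to `B` in `APOG(R)`. -/
def APOGPathLe3 (R : Type*) [Ring R] (A B : AddSubgroup R) : Prop :=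
  APOGEdge R A B ∨ (∃ C, APOGEdge R A C ∧ APOGEdge R C B) ∨
    ∃ C D, APOGEdge R A C ∧ APOGEdge R C D ∧ APOGEdge R D B

/-- `A^l(IPO(R))`. -/
def AleftIPO (R : Type*) [Ring R] : Set (AddSubgroup R) :=
  {A | APOGVertex R A ∧ ∃ B, APOGVertex R B ∧ B * A = ⊥}

/-- `A^r(IPO(R))`. -/
def ArightIPO (R : Type*) [Ring R] : Set (AddSubgroup R) :=
  {A | APOGVertex R A ∧ ∃ B, APOGVertex R B ∧ A * B = ⊥}

/-!
`IPO(R)` is closed under products, since a product of one-sided ideals with an outer left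
(right) factor is again a left (right) ideal. If `APOG(R)` is connected, the first and last
edges of a path between two vertices show that a left zero-divisor is a right one and vice
versa. Conversely, if `A^l = A^r` and `A → B` is not an edge, pick vertices `X`, `Y` with
`A X = 0 = Y B`: then `A → X → B`, `A → Y → B`, `A → X Y → B` or `A → X → Y → B` is a path.
-/

namespace AddSubgroup

variable {R : Type*}

theorem mul_mem_mul [NonUnitalNonAssocRing R] {M N : AddSubgroup R} {m n : R}
    (hm : m ∈ M) (hn : n ∈ N) : m * n ∈ M * N :=
  AddSubmonoid.mul_mem_mul hm hn

protected theorem mul_bot [NonUnitalNonAssocRing R] (M : AddSubgroup R) : M * ⊥ = ⊥ :=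
  toAddSubmonoid_injective (AddSubmonoid.mul_bot M.toAddSubmonoid)

protected theorem bot_mul [NonUnitalNonAssocRing R] (M : AddSubgroup R) : ⊥ * M = ⊥ :=
  toAddSubmonoid_injective (AddSubmonoid.bot_mul M.toAddSubmonoid)

protected theorem mul_assoc [NonUnitalRing R] (M N P : AddSubgroup R) :
    M * N * P = M * (N * P) :=
  toAddSubmonoid_injective (mul_assoc M.toAddSubmonoid N.toAddSubmonoid P.toAddSubmonoid)

end AddSubgroup

section IPO

variable {R : Type*} [Ring R]

theorem IsLeftIdeal.mul_right {I : AddSubgroup R} (hI : IsLeftIdeal R I) (J : AddSubgroup R) :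
    IsLeftIdeal R (I * J) := by
  intro r x hx
  refine AddSubmonoid.mul_induction_on hx (fun a ha b hb => ?_) (fun x y hx hy => ?_)
  · rw [← mul_assoc]
    exact AddSubgroup.mul_mem_mul (hI r a ha) hb
  · rw [mul_add]
    exact add_mem hx hy

theorem IsRightIdeal.mul_left {J : AddSubgroup R} (hJ : IsRightIdeal R J) (I : AddSubgroup R) :
    IsRightIdeal R (I * J) := by
  intro r x hx
  refine AddSubmonoid.mul_induction_on hx (fun a ha b hb => ?_) (fun x y hx hy => ?_)
  · rw [mul_assoc]
    exact AddSubgroup.mul_mem_mul ha (hJ r b hb)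
  · rw [add_mul]
    exact add_mem hx hy

theorem mul_mem_IPO {A B : AddSubgroup R} (hA : A ∈ IPO R) (hB : B ∈ IPO R) :
    A * B ∈ IPO R := by
  obtain ⟨I, J, hI, hJ, rfl⟩ := hA
  obtain ⟨K, L, hK, hL, rfl⟩ := hB
  rcases hJ with hJ | hJ
  · refine ⟨I, J * (K * L), hI, Or.inl (hJ.mul_right _), ?_⟩
    rw [AddSubgroup.mul_assoc]
  rcases hK with hK | hK
  · exact ⟨I * J, K * L, Or.inr (hJ.mul_left I), Or.inl (hK.mul_right L), rfl⟩
  · refine ⟨I * J * K, L, Or.inr (hK.mul_left _), hL, ?_⟩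
    rw [AddSubgroup.mul_assoc (I * J)]

end IPO

section APOG

variable {R : Type*} [Ring R] {A B C : AddSubgroup R}

theorem APOGVertex.mem_AleftIPO_or_mem_ArightIPO (hA : APOGVertex R A) :
    A ∈ AleftIPO R ∨ A ∈ ArightIPO R := by
  obtain ⟨B, hBI, hB0, h⟩ := hA.2.2
  have hB : APOGVertex R B := ⟨hBI, hB0, A, hA.1, hA.2.1, h.symm⟩
  rcases h with h | h
  · exact Or.inr ⟨hA, B, hB, h⟩
  · exact Or.inl ⟨hA, B, hB, h⟩

theorem APOGVertex.mem_AleftIPO_and_mem_ArightIPO (hEq : AleftIPO R = ArightIPO R)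
    (hA : APOGVertex R A) : A ∈ AleftIPO R ∧ A ∈ ArightIPO R := by
  rcases hA.mem_AleftIPO_or_mem_ArightIPO with h | h
  · exact ⟨h, hEq ▸ h⟩
  · exact ⟨hEq ▸ h, h⟩

theorem APOGPathLe3.of_mid (hA : APOGVertex R A) (hB : APOGVertex R B) (hC : C ∈ IPO R)
    (hC0 : C ≠ ⊥) (hAC : A * C = ⊥) (hCB : C * B = ⊥) (hAB : A * B ≠ ⊥) :
    APOGPathLe3 R A B := by
  have hCv : APOGVertex R C := ⟨hC, hC0, A, hA.1, hA.2.1, Or.inr hAC⟩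
  exact Or.inr (Or.inl ⟨C, ⟨hA, hCv, fun h => hAB (h ▸ hCB), hAC⟩,
    ⟨hCv, hB, fun h => hAB (h ▸ hAC), hCB⟩⟩)

theorem APOGPathLe3.transGen (h : APOGPathLe3 R A B) : Relation.TransGen (APOGEdge R) A B := by
  rcases h with h | ⟨C, h₁, h₂⟩ | ⟨C, D, h₁, h₂, h₃⟩
  · exact .single h
  · exact (Relation.TransGen.single h₁).tail h₂
  · exact ((Relation.TransGen.single h₁).tail h₂).tail h₃

theorem AleftIPO_eq_ArightIPO_of_connected (hc : APOGConnected R) :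
    AleftIPO R = ArightIPO R := by
  ext A
  constructor
  · rintro ⟨hA, B, hB, hBA⟩
    by_cases h : A = B
    · subst h
      exact ⟨hA, A, hA, hBA⟩
    · obtain ⟨C, hAC, -⟩ := Relation.TransGen.head'_iff.mp (hc A B hA hB h)
      exact ⟨hA, C, hAC.2.1, hAC.2.2.2⟩
  · rintro ⟨hA, B, hB, hAB⟩
    by_cases h : B = A
    · subst h
      exact ⟨hA, B, hA, hAB⟩
    · obtain ⟨D, -, hDA⟩ := Relation.TransGen.tail'_iff.mp (hc B A hB hA h)
      exact ⟨hA, D, hDA.1, hDA.2.2.2⟩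

theorem APOGPathLe3.of_AleftIPO_eq_ArightIPO (hEq : AleftIPO R = ArightIPO R)
    (hA : APOGVertex R A) (hB : APOGVertex R B) (hne : A ≠ B) : APOGPathLe3 R A B := by
  by_cases hAB : A * B = ⊥
  · exact Or.inl ⟨hA, hB, hne, hAB⟩
  obtain ⟨X, hX, hAX⟩ := (hA.mem_AleftIPO_and_mem_ArightIPO hEq).2.2
  obtain ⟨Y, hY, hYB⟩ := (hB.mem_AleftIPO_and_mem_ArightIPO hEq).1.2
  have via (C : AddSubgroup R) (hC : APOGVertex R C) (hAC : A * C = ⊥) (hCB : C * B = ⊥) :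
      APOGPathLe3 R A B :=
    .of_mid hA hB hC.1 hC.2.1 hAC hCB hAB
  by_cases hXB : X * B = ⊥
  · exact via X hX hAX hXB
  by_cases hAY : A * Y = ⊥
  · exact via Y hY hAY hYB
  by_cases hXY : X * Y = ⊥
  · exact Or.inr (Or.inr ⟨X, Y, ⟨hA, hX, fun h => hAY (h ▸ hXY), hAX⟩,
      ⟨hX, hY, fun h => hXB (h ▸ hYB), hXY⟩, ⟨hY, hB, fun h => hXB (h ▸ hXY), hYB⟩⟩)
  · refine APOGPathLe3.of_mid hA hB (mul_mem_IPO hX.1 hY.1) hXY ?_ ?_ hAB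
    · rw [← AddSubgroup.mul_assoc, hAX, AddSubgroup.bot_mul]
    · rw [AddSubgroup.mul_assoc, hYB, AddSubgroup.mul_bot]

end APOG

/-- `APOG(R)` is connected iff `A^l(IPO(R)) = A^r(IPO(R))`; moreover,
if `APOG(R)` is connected then every pair of distinct vertices is joined by a directed
path of length at most `3`, i.e. `diam(APOG(R)) ≤ 3`. -/
theorem APOG_connected_iff (R : Type*) [Ring R] :
    (APOGConnected R ↔ AleftIPO R = ArightIPO R) ∧
    (APOGConnected R →
      ∀ A B : AddSubgroup R, APOGVertex R A → APOGVertex R B → A ≠ B →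
        APOGPathLe3 R A B) := by
  refine ⟨⟨AleftIPO_eq_ArightIPO_of_connected, fun hEq A B hA hB hne => ?_⟩,
    fun hc A B => .of_AleftIPO_eq_ArightIPO (AleftIPO_eq_ArightIPO_of_connected hc)⟩
  exact (APOGPathLe3.of_AleftIPO_eq_ArightIPO hEq hA hB hne).transGen
end

section
/- Let R be a ring with identity such that APOG(R) ≠ ∅, and let I be a left or right ideal of R that is a vertex of APOG(R). Then R is a left and right Noetherian ring if and only if adu(I) satisfies the ascending chain condition both on its elements that are left ideals of R and on its elements that are right ideals of R. -/
open scoped Pointwise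

/-- `A ⇌ B`: `A ≠ B` and `A*B = 0` or `B*A = 0`. -/
def APOGAdj (R : Type*) [Ring R] (A B : AddSubgroup R) : Prop :=
  A ≠ B ∧ (A * B = ⊥ ∨ B * A = ⊥)

/-- `ad(C)`: the vertices `A` with `A = C`, or `C ⇌ A`, or `C ⇌ B ⇌ A` for some vertex `B`. -/
def ad (R : Type*) [Ring R] (C : AddSubgroup R) : Set (AddSubgroup R) :=
  {A | APOGVertex R A ∧ (A = C ∨ APOGAdj R C A ∨
    ∃ B, APOGVertex R B ∧ APOGAdj R C B ∧ APOGAdj R B A)}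

/-- `adu(D) = ⋃ { ad(C) : C a vertex of APOG(R) with C ⊆ D }`. -/
def adu (R : Type*) [Ring R] (D : AddSubgroup R) : Set (AddSubgroup R) :=
  {A | ∃ C : AddSubgroup R, APOGVertex R C ∧ C ≤ D ∧ A ∈ ad R C}

/-- A family `T` of additive subgroups satisfies the descending chain condition. -/
def DCCOn (R : Type*) [Ring R] (T : Set (AddSubgroup R)) : Prop :=
  ∀ f : ℕ → AddSubgroup R, (∀ n, f n ∈ T) → (∀ n, f (n + 1) ≤ f n) →
    ∃ N, ∀ n, N ≤ n → f n = f N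

/-- A family `T` of additive subgroups satisfies the ascending chain condition. -/
def ACCOn (R : Type*) [Ring R] (T : Set (AddSubgroup R)) : Prop :=
  ∀ f : ℕ → AddSubgroup R, (∀ n, f n ∈ T) → (∀ n, f n ≤ f (n + 1)) →
    ∃ N, ∀ n, N ≤ n → f n = f N

/-!
For `a : R` and an ascending chain of left ideals `Jₙ`, the chains `Jₙ ∩ ann(a)` and `Jₙ·a`
determine `Jₙ` (modular law applied to right multiplication by `a`). The first consists of left
ideals `J` with `J·(aR) = 0`, the second of left ideals inside `Ra`; symmetrically for right
ideals. So if `Ra` and `aR` lie within distance one of a vertex `C ⊆ I` of the zero-product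
graph on `IPO(R)`, all these ideals lie within distance two of `C`, hence in `adu(I)`, and ACC
on `adu(I)` gives ACC on all one-sided ideals.

Such `a` and `C` exist: since `I` is a vertex there is `b ≠ 0` with `I·b = 0` or `b·I = 0`.
Either `C = I` and `a = b` work, or (say `I·b = 0`, `I` a left ideal, `b·i ≠ 0`) the element
`a = b·i ∈ I` satisfies `a² = b(ib)i = 0`, and then `C = Ra` works.
-/

theorem AddSubgroup.mul_eq_bot_iff_forall {R : Type*} [NonUnitalNonAssocRing R]
    {A B : AddSubgroup R} : A * B = ⊥ ↔ ∀ x ∈ A, ∀ y ∈ B, x * y = 0 := by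
  rw [eq_bot_iff]
  constructor
  · intro h x hx y hy
    exact mem_bot.1 (h (AddSubmonoid.mul_mem_mul hx hy))
  · intro h z hz
    exact AddSubmonoid.mul_le.2 (fun x hx y hy => by simp [h x hx y hy]) hz

theorem AddSubgroup.eq_of_le_of_inf_ker_eq_of_map_eq {G H : Type*} [AddCommGroup G] [AddGroup H]
    {A B : AddSubgroup G} (g : G →+ H) (hAB : A ≤ B) (hker : A ⊓ g.ker = B ⊓ g.ker)
    (hmap : A.map g = B.map g) : A = B :=
  eq_of_le_of_inf_le_of_sup_le hAB hker.ge (map_eq_map_iff.1 hmap).ge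

section

variable {R : Type*} [Ring R]

theorem IsLeftIdeal.mem_IPO {J : AddSubgroup R} (hJ : IsLeftIdeal R J) : J ∈ IPO R := by
  refine ⟨⊤, J, Or.inl fun _ _ _ => trivial, Or.inl hJ, le_antisymm (fun x hx => ?_) ?_⟩
  · have h1x := AddSubmonoid.mul_mem_mul (AddSubgroup.mem_top (1 : R)) hx
    rwa [one_mul] at h1x
  · exact fun z hz => AddSubmonoid.mul_le.2 (fun r _ x hx => hJ r x hx) hz

theorem IsRightIdeal.mem_IPO {J : AddSubgroup R} (hJ : IsRightIdeal R J) : J ∈ IPO R := by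
  refine ⟨J, ⊤, Or.inr hJ, Or.inr fun _ _ _ => trivial, le_antisymm (fun x hx => ?_) ?_⟩
  · have hx1 := AddSubmonoid.mul_mem_mul hx (AddSubgroup.mem_top (1 : R))
    rwa [mul_one] at hx1
  · exact fun z hz => AddSubmonoid.mul_le.2 (fun x hx r _ => hJ r x hx) hz

def leftPrincipal (a : R) : AddSubgroup R := (AddMonoidHom.mulRight a).range

def rightPrincipal (a : R) : AddSubgroup R := (AddMonoidHom.mulLeft a).range

theorem isLeftIdeal_leftPrincipal (a : R) : IsLeftIdeal R (leftPrincipal a) := by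
  rintro r _ ⟨s, rfl⟩
  exact ⟨r * s, mul_assoc r s a⟩

theorem isRightIdeal_rightPrincipal (a : R) : IsRightIdeal R (rightPrincipal a) := by
  rintro r _ ⟨s, rfl⟩
  exact ⟨s * r, (mul_assoc a s r).symm⟩

theorem self_mem_leftPrincipal (a : R) : a ∈ leftPrincipal a := ⟨1, one_mul a⟩

theorem self_mem_rightPrincipal (a : R) : a ∈ rightPrincipal a := ⟨1, mul_one a⟩

theorem leftPrincipal_ne_bot {a : R} (ha : a ≠ 0) : leftPrincipal a ≠ ⊥ :=
  fun h => ha ((AddSubgroup.mem_bot).1 (h ▸ self_mem_leftPrincipal a))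

theorem rightPrincipal_ne_bot {a : R} (ha : a ≠ 0) : rightPrincipal a ≠ ⊥ :=
  fun h => ha ((AddSubgroup.mem_bot).1 (h ▸ self_mem_rightPrincipal a))

theorem leftPrincipal_le {I : AddSubgroup R} (hI : IsLeftIdeal R I) {a : R} (ha : a ∈ I) :
    leftPrincipal a ≤ I := by
  rintro _ ⟨r, rfl⟩
  exact hI r a ha

theorem rightPrincipal_le {I : AddSubgroup R} (hI : IsRightIdeal R I) {a : R} (ha : a ∈ I) :
    rightPrincipal a ≤ I := by
  rintro _ ⟨r, rfl⟩
  exact hI r a ha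

theorem leftPrincipal_mul_eq_bot_iff {a : R} {K : AddSubgroup R} :
    leftPrincipal a * K = ⊥ ↔ ∀ k ∈ K, a * k = 0 := by
  rw [AddSubgroup.mul_eq_bot_iff_forall]
  refine ⟨fun h k hk => h a (self_mem_leftPrincipal a) k hk, ?_⟩
  rintro h _ ⟨r, rfl⟩ k hk
  rw [AddMonoidHom.mulRight_apply, mul_assoc, h k hk, mul_zero]

theorem mul_rightPrincipal_eq_bot_iff {a : R} {J : AddSubgroup R} :
    J * rightPrincipal a = ⊥ ↔ ∀ j ∈ J, j * a = 0 := by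
  rw [AddSubgroup.mul_eq_bot_iff_forall]
  refine ⟨fun h j hj => h j hj a (self_mem_rightPrincipal a), ?_⟩
  rintro h j hj _ ⟨r, rfl⟩
  show j * (a * r) = 0
  rw [← mul_assoc, h j hj, zero_mul]

theorem mul_leftPrincipal_eq_bot_iff {a : R} {J : AddSubgroup R} (hJ : IsRightIdeal R J) :
    J * leftPrincipal a = ⊥ ↔ ∀ j ∈ J, j * a = 0 := by
  rw [AddSubgroup.mul_eq_bot_iff_forall]
  refine ⟨fun h j hj => h j hj a (self_mem_leftPrincipal a), ?_⟩
  rintro h j hj _ ⟨r, rfl⟩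
  rw [AddMonoidHom.mulRight_apply, ← mul_assoc, h _ (hJ r j hj)]

theorem rightPrincipal_mul_eq_bot_iff {a : R} {K : AddSubgroup R} (hK : IsLeftIdeal R K) :
    rightPrincipal a * K = ⊥ ↔ ∀ k ∈ K, a * k = 0 := by
  rw [AddSubgroup.mul_eq_bot_iff_forall]
  refine ⟨fun h k hk => h a (self_mem_rightPrincipal a) k hk, ?_⟩
  rintro h _ ⟨r, rfl⟩ k hk
  show a * r * k = 0
  rw [mul_assoc, h _ (hK r k hk)]

theorem leftPrincipal_mul_rightPrincipal_eq_bot {a : R} (haa : a * a = 0) :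
    leftPrincipal a * rightPrincipal a = ⊥ := by
  refine mul_rightPrincipal_eq_bot_iff.2 ?_
  rintro _ ⟨r, rfl⟩
  rw [AddMonoidHom.mulRight_apply, mul_assoc, haa, mul_zero]

/-- Adjacency in the zero-product graph, loops allowed (unlike `APOGAdj`). -/
def ZeroProd (A B : AddSubgroup R) : Prop := A * B = ⊥ ∨ B * A = ⊥

theorem ZeroProd.symm {A B : AddSubgroup R} (h : ZeroProd A B) : ZeroProd B A := Or.symm h

theorem ZeroProd.mono_left {A A' B : AddSubgroup R} (h : ZeroProd A B) (hA : A' ≤ A) :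
    ZeroProd A' B := by
  unfold ZeroProd at h ⊢
  simp only [AddSubgroup.mul_eq_bot_iff_forall] at h ⊢
  exact h.imp (fun h x hx => h x (hA hx)) fun h y hy x hx => h y hy x (hA hx)

theorem APOGVertex.of_zeroProd {A B : AddSubgroup R} (hA : A ∈ IPO R) (hA0 : A ≠ ⊥)
    (hB : B ∈ IPO R) (hB0 : B ≠ ⊥) (h : ZeroProd A B) : APOGVertex R A :=
  ⟨hA, hA0, B, hB, hB0, h⟩

def closedNbhd (C : AddSubgroup R) : Set (AddSubgroup R) :=
  {Y | Y ∈ IPO R ∧ Y ≠ ⊥ ∧ (Y = C ∨ ZeroProd C Y)}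

def closedBall2 (C : AddSubgroup R) : Set (AddSubgroup R) :=
  {A | A ∈ IPO R ∧ A ≠ ⊥ ∧ ∃ Y ∈ closedNbhd C, ZeroProd A Y}

theorem closedNbhd_subset_closedBall2 {C : AddSubgroup R} (hC : APOGVertex R C) :
    closedNbhd C ⊆ closedBall2 C := by
  obtain ⟨hCI, hC0, B, hB, hB0, hCB⟩ := hC
  rintro Y ⟨hY, hY0, rfl | hCY⟩
  · exact ⟨hY, hY0, B, ⟨hB, hB0, Or.inr hCB⟩, hCB⟩
  · exact ⟨hY, hY0, C, ⟨hCI, hC0, Or.inl rfl⟩, hCY.symm⟩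

theorem mem_closedBall2_of_le {C A B : AddSubgroup R} (hA : A ∈ closedBall2 C)
    (hB : B ∈ IPO R) (hB0 : B ≠ ⊥) (hBA : B ≤ A) : B ∈ closedBall2 C := by
  obtain ⟨-, -, Y, hY, hAY⟩ := hA
  exact ⟨hB, hB0, Y, hY, hAY.mono_left hBA⟩

theorem closedBall2_subset_adu {I C : AddSubgroup R} (hC : APOGVertex R C) (hCI : C ≤ I) :
    closedBall2 C ⊆ adu R I := by
  rintro A ⟨hA, hA0, Y, ⟨hY, hY0, hCY⟩, hAY⟩
  have hAv : APOGVertex R A := .of_zeroProd hA hA0 hY hY0 hAY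
  refine ⟨C, hC, hCI, hAv, ?_⟩
  by_cases hAC : A = C
  · exact Or.inl hAC
  by_cases hYC : Y = C
  · subst hYC
    exact Or.inr (Or.inl ⟨Ne.symm hAC, hAY.symm⟩)
  have hCY : ZeroProd C Y := hCY.resolve_left hYC
  by_cases hAY' : A = Y
  · subst hAY'
    exact Or.inr (Or.inl ⟨Ne.symm hAC, hCY⟩)
  exact Or.inr (Or.inr ⟨Y, .of_zeroProd hY hY0 hA hA0 hAY.symm, ⟨Ne.symm hYC, hCY⟩,
    ⟨Ne.symm hAY', hAY.symm⟩⟩)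

theorem ACCOn.mono {S T : Set (AddSubgroup R)} (h : ACCOn R T) (hST : S ⊆ T) : ACCOn R S :=
  fun f hf hmono => h f (fun n => hST (hf n)) hmono

theorem ACCOn.insert_bot {T : Set (AddSubgroup R)} (h : ACCOn R T) : ACCOn R (insert ⊥ T) := by
  intro f hf hmono
  have hf' : Monotone f := monotone_nat_of_le_succ hmono
  by_cases hbot : ∀ n, f n = ⊥
  · exact ⟨0, fun n _ => (hbot n).trans (hbot 0).symm⟩
  push Not at hbot
  obtain ⟨k, hk⟩ := hbot
  have hT : ∀ n, f (n + k) ∈ T := fun n =>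
    (hf (n + k)).resolve_left fun h0 => hk (le_bot_iff.1 (h0 ▸ hf' (Nat.le_add_left k n)))
  obtain ⟨N, hN⟩ := h (fun n => f (n + k)) hT fun n => hf' (by omega)
  refine ⟨N + k, fun n hn => ?_⟩
  obtain ⟨m, rfl⟩ := Nat.exists_eq_add_of_le' hn
  rw [← add_assoc]
  exact hN (m + N) (Nat.le_add_left N m)

theorem ACCOn.of_inf_ker_of_map {S T : Set (AddSubgroup R)} (g : R →+ R) (hS : ACCOn R S)
    (hker : ∀ A ∈ T, A ⊓ g.ker ∈ S) (hmap : ∀ A ∈ T, A.map g ∈ S) : ACCOn R T := by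
  intro f hf hmono
  have hf' : Monotone f := monotone_nat_of_le_succ hmono
  obtain ⟨N₁, hN₁⟩ := hS (fun n => f n ⊓ g.ker) (fun n => hker _ (hf n))
    fun n => inf_le_inf_right _ (hmono n)
  obtain ⟨N₂, hN₂⟩ := hS (fun n => (f n).map g) (fun n => hmap _ (hf n))
    fun n => AddSubgroup.map_mono (hmono n)
  refine ⟨max N₁ N₂, fun n hn => (AddSubgroup.eq_of_le_of_inf_ker_eq_of_map_eq g
    (hf' hn) ?_ ?_).symm⟩
  · rw [hN₁ n (le_of_max_le_left hn), hN₁ _ (le_max_left _ _)]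
  · rw [hN₂ n (le_of_max_le_right hn), hN₂ _ (le_max_right _ _)]

theorem IsLeftIdeal.inf_ker_mulRight {J : AddSubgroup R} (hJ : IsLeftIdeal R J) (a : R) :
    IsLeftIdeal R (J ⊓ (AddMonoidHom.mulRight a).ker) := by
  intro r x hx
  have hxa : x * a = 0 := hx.2
  exact ⟨hJ r x hx.1, show r * x * a = 0 by rw [mul_assoc, hxa, mul_zero]⟩

theorem IsRightIdeal.inf_ker_mulLeft {J : AddSubgroup R} (hJ : IsRightIdeal R J) (a : R) :
    IsRightIdeal R (J ⊓ (AddMonoidHom.mulLeft a).ker) := by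
  intro r x hx
  have hax : a * x = 0 := hx.2
  exact ⟨hJ r x hx.1, show a * (x * r) = 0 by rw [← mul_assoc, hax, zero_mul]⟩

theorem IsLeftIdeal.map_mulRight {J : AddSubgroup R} (hJ : IsLeftIdeal R J) (a : R) :
    IsLeftIdeal R (J.map (AddMonoidHom.mulRight a)) := by
  rintro r _ ⟨x, hx, rfl⟩
  exact ⟨r * x, hJ r x hx, mul_assoc r x a⟩

theorem IsRightIdeal.map_mulLeft {J : AddSubgroup R} (hJ : IsRightIdeal R J) (a : R) :
    IsRightIdeal R (J.map (AddMonoidHom.mulLeft a)) := by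
  rintro r _ ⟨x, hx, rfl⟩
  exact ⟨x * r, hJ r x hx, (mul_assoc a x r).symm⟩

def NearVertexIn (I : AddSubgroup R) (a : R) : Prop :=
  ∃ C, APOGVertex R C ∧ C ≤ I ∧ leftPrincipal a ∈ closedNbhd C ∧ rightPrincipal a ∈ closedNbhd C

theorem NearVertexIn.accOn_isLeftIdeal {I : AddSubgroup R} {a : R} (h : NearVertexIn I a)
    (hacc : ACCOn R (adu R I ∩ {J | IsLeftIdeal R J})) : ACCOn R {J | IsLeftIdeal R J} := by
  obtain ⟨C, hC, hCI, hL, hD⟩ := h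
  have mem_of_ball (J : AddSubgroup R) (hJ : IsLeftIdeal R J)
      (hJC : J ≠ ⊥ → J ∈ closedBall2 C) : J ∈ insert ⊥ (adu R I ∩ {J | IsLeftIdeal R J}) :=
    (eq_or_ne J ⊥).imp id fun hJ0 => ⟨closedBall2_subset_adu hC hCI (hJC hJ0), hJ⟩
  refine hacc.insert_bot.of_inf_ker_of_map (AddMonoidHom.mulRight a) (fun J hJ => ?_)
    fun J hJ => ?_
  · have hK := IsLeftIdeal.inf_ker_mulRight hJ a
    refine mem_of_ball _ hK fun hK0 => ⟨hK.mem_IPO, hK0, rightPrincipal a, hD, Or.inl ?_⟩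
    exact mul_rightPrincipal_eq_bot_iff.2 fun x hx => hx.2
  · have hK := IsLeftIdeal.map_mulRight hJ a
    exact mem_of_ball _ hK fun hK0 => mem_closedBall2_of_le
      (closedNbhd_subset_closedBall2 hC hL) hK.mem_IPO hK0 (AddSubgroup.map_le_range _ _)

theorem NearVertexIn.accOn_isRightIdeal {I : AddSubgroup R} {a : R} (h : NearVertexIn I a)
    (hacc : ACCOn R (adu R I ∩ {J | IsRightIdeal R J})) : ACCOn R {J | IsRightIdeal R J} := by
  obtain ⟨C, hC, hCI, hL, hD⟩ := h
  have mem_of_ball (J : AddSubgroup R) (hJ : IsRightIdeal R J)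
      (hJC : J ≠ ⊥ → J ∈ closedBall2 C) : J ∈ insert ⊥ (adu R I ∩ {J | IsRightIdeal R J}) :=
    (eq_or_ne J ⊥).imp id fun hJ0 => ⟨closedBall2_subset_adu hC hCI (hJC hJ0), hJ⟩
  refine hacc.insert_bot.of_inf_ker_of_map (AddMonoidHom.mulLeft a) (fun J hJ => ?_)
    fun J hJ => ?_
  · have hK := IsRightIdeal.inf_ker_mulLeft hJ a
    refine mem_of_ball _ hK fun hK0 => ⟨hK.mem_IPO, hK0, leftPrincipal a, hL, Or.inr ?_⟩
    exact leftPrincipal_mul_eq_bot_iff.2 fun x hx => hx.2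
  · have hK := IsRightIdeal.map_mulLeft hJ a
    exact mem_of_ball _ hK fun hK0 => mem_closedBall2_of_le
      (closedNbhd_subset_closedBall2 hC hD) hK.mem_IPO hK0 (AddSubgroup.map_le_range _ _)

theorem nearVertexIn_of_zeroProd {I : AddSubgroup R} (hI : APOGVertex R I) {a : R} (ha : a ≠ 0)
    (hL : ZeroProd I (leftPrincipal a)) (hD : ZeroProd I (rightPrincipal a)) :
    NearVertexIn I a :=
  ⟨I, hI, le_rfl,
    ⟨(isLeftIdeal_leftPrincipal a).mem_IPO, leftPrincipal_ne_bot ha, Or.inr hL⟩,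
    ⟨(isRightIdeal_rightPrincipal a).mem_IPO, rightPrincipal_ne_bot ha, Or.inr hD⟩⟩

theorem nearVertexIn_of_mul_self_eq_zero {I : AddSubgroup R} {a : R} (ha : a ≠ 0)
    (haa : a * a = 0) (hI : leftPrincipal a ≤ I ∨ rightPrincipal a ≤ I) : NearVertexIn I a := by
  have hL := (isLeftIdeal_leftPrincipal a).mem_IPO
  have hD := (isRightIdeal_rightPrincipal a).mem_IPO
  have hL0 := leftPrincipal_ne_bot ha
  have hD0 := rightPrincipal_ne_bot ha
  have hLD : ZeroProd (leftPrincipal a) (rightPrincipal a) :=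
    Or.inl (leftPrincipal_mul_rightPrincipal_eq_bot haa)
  rcases hI with hLI | hDI
  · exact ⟨_, .of_zeroProd hL hL0 hD hD0 hLD, hLI, ⟨hL, hL0, Or.inl rfl⟩, ⟨hD, hD0, Or.inr hLD⟩⟩
  · exact ⟨_, .of_zeroProd hD hD0 hL hL0 hLD.symm, hDI, ⟨hL, hL0, Or.inr hLD.symm⟩,
      ⟨hD, hD0, Or.inl rfl⟩⟩

theorem exists_nearVertexIn_of_isLeftIdeal {I : AddSubgroup R} (hIl : IsLeftIdeal R I)
    (hIv : APOGVertex R I) {b : R} (hb : b ≠ 0) (hIb : ∀ i ∈ I, i * b = 0) :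
    ∃ a, NearVertexIn I a := by
  by_cases hbI : ∀ i ∈ I, b * i = 0
  · exact ⟨b, nearVertexIn_of_zeroProd hIv hb (Or.inr (leftPrincipal_mul_eq_bot_iff.2 hbI))
      (Or.inl (mul_rightPrincipal_eq_bot_iff.2 hIb))⟩
  push Not at hbI
  obtain ⟨i, hi, hbi⟩ := hbI
  refine ⟨b * i, nearVertexIn_of_mul_self_eq_zero hbi ?_
    (Or.inl (leftPrincipal_le hIl (hIl b i hi)))⟩
  rw [mul_assoc, ← mul_assoc i, hIb i hi, zero_mul, mul_zero]

theorem exists_nearVertexIn_of_isRightIdeal {I : AddSubgroup R} (hIr : IsRightIdeal R I)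
    (hIv : APOGVertex R I) {b : R} (hb : b ≠ 0) (hbI : ∀ i ∈ I, b * i = 0) :
    ∃ a, NearVertexIn I a := by
  by_cases hIb : ∀ i ∈ I, i * b = 0
  · exact ⟨b, nearVertexIn_of_zeroProd hIv hb (Or.inr (leftPrincipal_mul_eq_bot_iff.2 hbI))
      (Or.inl (mul_rightPrincipal_eq_bot_iff.2 hIb))⟩
  push Not at hIb
  obtain ⟨i, hi, hib⟩ := hIb
  refine ⟨i * b, nearVertexIn_of_mul_self_eq_zero hib ?_
    (Or.inr (rightPrincipal_le hIr (hIr b i hi)))⟩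
  rw [mul_assoc, ← mul_assoc b, hbI i hi, zero_mul, mul_zero]

theorem exists_nearVertexIn {I : AddSubgroup R} (hI : IsOneSidedIdeal R I)
    (hIv : APOGVertex R I) : ∃ a, NearVertexIn I a := by
  obtain ⟨B, -, hB0, hIB | hBI⟩ := hIv.2.2
  all_goals obtain ⟨b, hbB, hb⟩ := (AddSubgroup.bot_or_exists_ne_zero B).resolve_left hB0
  · have hIb : ∀ i ∈ I, i * b = 0 := fun i hi =>
      AddSubgroup.mul_eq_bot_iff_forall.1 hIB i hi b hbB
    rcases hI with hIl | hIr
    · exact exists_nearVertexIn_of_isLeftIdeal hIl hIv hb hIb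
    · exact ⟨b, nearVertexIn_of_zeroProd hIv hb
        (Or.inl ((mul_leftPrincipal_eq_bot_iff hIr).2 hIb))
        (Or.inl (mul_rightPrincipal_eq_bot_iff.2 hIb))⟩
  · have hbI : ∀ i ∈ I, b * i = 0 := fun i hi =>
      AddSubgroup.mul_eq_bot_iff_forall.1 hBI b hbB i hi
    rcases hI with hIl | hIr
    · exact ⟨b, nearVertexIn_of_zeroProd hIv hb (Or.inr (leftPrincipal_mul_eq_bot_iff.2 hbI))
        (Or.inr ((rightPrincipal_mul_eq_bot_iff hIl).2 hbI))⟩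
    · exact exists_nearVertexIn_of_isRightIdeal hIr hIv hb hbI

end

theorem noetherian_iff_adu_acc_general (R : Type*) [Ring R]
    (I : AddSubgroup R) (hI : IsOneSidedIdeal R I) (hIv : APOGVertex R I) :
    (ACCOn R {J | IsLeftIdeal R J} ∧ ACCOn R {J | IsRightIdeal R J}) ↔
      (ACCOn R (adu R I ∩ {J | IsLeftIdeal R J}) ∧
        ACCOn R (adu R I ∩ {J | IsRightIdeal R J})) := by
  refine ⟨fun ⟨hL, hR⟩ => ⟨hL.mono Set.inter_subset_right, hR.mono Set.inter_subset_right⟩,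
    fun ⟨hL, hR⟩ => ?_⟩
  obtain ⟨a, ha⟩ := exists_nearVertexIn hI hIv
  exact ⟨ha.accOn_isLeftIdeal hL, ha.accOn_isRightIdeal hR⟩

/-- Suppose `APOG(R) ≠ ∅` and `I` is a one-sided ideal of `R` which is a
vertex of `APOG(R)`.  Then `R` is left and right Noetherian iff `adu(I)` has ACC both on
its members that are left ideals and on its members that are right ideals. -/
theorem noetherian_iff_adu_acc (R : Type*) [Ring R]
    (hne : ∃ A : AddSubgroup R, APOGVertex R A)
    (I : AddSubgroup R) (hI : IsOneSidedIdeal R I) (hIv : APOGVertex R I) :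
    (ACCOn R {J | IsLeftIdeal R J} ∧ ACCOn R {J | IsRightIdeal R J}) ↔
      (ACCOn R (adu R I ∩ {J | IsLeftIdeal R J}) ∧
        ACCOn R (adu R I ∩ {J | IsRightIdeal R J})) :=
  noetherian_iff_adu_acc_general R I hI hIv
end
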